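/- Let S ⊂ F_2^a be the span of M_a'. Then for all distinct i, j ∈ S, the translates T_a^{(i)} = i ⊕ T_a and T_a^{(j)} = j ⊕ T_a are disjoint. -/

import Mathlib

open scoped Classical

noncomputable section

/-- `b = ⌊log₂ a⌋ + 1`. -/
def bb (a : ℕ) : ℕ := Nat.log 2 a + 1

/-- `m = 2^b - a - 1`. -/
def mm (a : ℕ) : ℕ := 2 ^ bb a - a - 1

/-- `q = a - 2^(b-1)`. -/
def qq (a : ℕ) : ℕ := a - 2 ^ (bb a - 1)

/-- `M_a = {x : 0 < x ≤ a, x is not a power of 2}`. -/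
def Ma (a : ℕ) : Set ℕ := {x | 0 < x ∧ x ≤ a ∧ ¬ ∃ k, x = 2 ^ k}

/-- `g(x) = 2x` if bit `b-1` of `x` is `0`, else `g(x) = 2x + 1 - 2^b`. -/
def gg (a x : ℕ) : ℕ := if x.testBit (bb a - 1) then 2 * x + 1 - 2 ^ bb a else 2 * x

/-- `f'(x) = x` if `x ∈ M_a`, else `f'(x) = x + 1 - 2⌈m/2⌉` (intended domain `g(M_a)`). -/
def ff' (a x : ℕ) : ℕ := if x ∈ Ma a then x else x + 1 - 2 * ((mm a + 1) / 2)

/-- `f = f' ∘ g`. -/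
def ff (a x : ℕ) : ℕ := ff' a (gg a x)

/-- the `j`-th binary digit of `x`, as a natural number. -/
def bitv (x j : ℕ) : ℕ := if x.testBit j then 1 else 0

/-- `h(x) = 2^(f(x)-1) + Σ_{j=0}^{b-2} x_j 2^(2^(j+1)-1) + x_{b-1}`. -/
def hh (a x : ℕ) : ℕ :=
  2 ^ (ff a x - 1) + (∑ j ∈ Finset.range (bb a - 1), bitv x j * 2 ^ (2 ^ (j + 1) - 1)) +
    bitv x (bb a - 1)

/-- Hamming weight of `x` viewed as a vector in `F_2^a`. -/
def wt (a x : ℕ) : ℕ := ((Finset.range a).filter (fun j => x.testBit j)).card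

/-- identification of `Z_{2^a}` with `F_2^a` via radix-2 representation. -/
def toVec (a x : ℕ) : Fin a → ZMod 2 := fun j => if x.testBit (j : ℕ) then 1 else 0

/-- `S`, the `F_2`-span of `M_a' = h(M_a)` inside `F_2^a`. -/
def Ssub (a : ℕ) : Submodule (ZMod 2) (Fin a → ZMod 2) :=
  Submodule.span (ZMod 2) (toVec a '' (hh a '' Ma a))

/-- `P_a = {0, 2^0, 2^1, …, 2^(a-1)}`. -/
def Pa (a : ℕ) : Set ℕ := {0} ∪ {y | ∃ j < a, y = 2 ^ j}

/-- `Q_a = ∅` if `a+1` is a power of `2`, else `{1 ⊕ 2^j : a-m ≤ j ≤ a-1}`. -/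
def Qa (a : ℕ) : Set ℕ :=
  if ∃ k, a + 1 = 2 ^ k then ∅ else {y | ∃ j, a - mm a ≤ j ∧ j < a ∧ y = 1 ^^^ 2 ^ j}

/-- `T_a = P_a ∪ Q_a`. -/
def Ta (a : ℕ) : Set ℕ := Pa a ∪ Qa a

end

/-!
`S` lies in the kernel of a `b × a` parity-check matrix `H` over `𝔽₂` whose columns
`c₀, …, c_{a-1}` are the numbers `1, …, a` in a suitable order: `h x` has one coordinate with
column `x` and one coordinate with column `2^j` for each binary digit `j` of `x`, so
`H (h x) = x ⊕ x = 0`. If `i ⊕ t = j ⊕ t'` with `i, j ∈ S` and `t, t' ∈ T_a`, then `H t = H t'`.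
The syndromes of the elements of `T_a` are `0`, the `c_j ∈ [1, a]`, and the `2^(b-1) + c_k` with
`q < c_k < 2^(b-1)` (which lie in `(a, 2^b)`), so they are pairwise distinct; hence `t = t'` and
`i = j`.
-/

namespace Nat

theorem testBit_sum_two_pow (s : Finset ℕ) (r : ℕ) :
    (∑ i ∈ s, 2 ^ i).testBit r ↔ r ∈ s := by
  rw [← mem_bitIndices, ← List.mem_toFinset, Finset.toFinset_bitIndices_sum_two_pow]

theorem testBit_of_lt_two_mul_two_pow {x k : ℕ} (hx : x < 2 * 2 ^ k) :
    x.testBit k = decide (2 ^ k ≤ x) := by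
  rcases le_or_gt (2 ^ k) x with h | h
  · have := testBit_two_pow_mul_add 1 (show x - 2 ^ k < 2 ^ k by omega) k
    rw [mul_one, Nat.add_sub_cancel' h] at this
    simp [this, h]
  · simp [testBit_lt_two_pow h, h]

theorem two_pow_xor_eq_add {k x : ℕ} (hx : x < 2 ^ k) : 2 ^ k ^^^ x = 2 ^ k + x := by
  apply eq_of_testBit_eq
  intro j
  have := testBit_two_pow_mul_add 1 hx j
  rw [mul_one] at this
  rw [testBit_xor, this, testBit_two_pow]
  split_ifs with h
  · simp [h.ne']
  · have hj : 2 ^ k ≤ 2 ^ j := Nat.pow_le_pow_right (by norm_num) (by omega)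
    rw [testBit_lt_two_pow (by omega : x < 2 ^ j)]
    rcases eq_or_lt_of_le (not_lt.1 h) with rfl | hkj
    · simp
    · simp [hkj.ne, testBit_lt_two_pow (Nat.one_lt_two_pow (by omega : j - k ≠ 0))]

end Nat

open Finset Matrix

theorem toVec_zero (n : ℕ) : toVec n 0 = 0 := by
  funext r; simp [toVec]

theorem toVec_xor (n u v : ℕ) : toVec n (u ^^^ v) = toVec n u + toVec n v := by
  funext r
  simp only [toVec, Pi.add_apply, Nat.testBit_xor]
  cases u.testBit r <;> cases v.testBit r <;> decide

theorem toVec_two_pow {n j : ℕ} (hj : j < n) : toVec n (2 ^ j) = Pi.single ⟨j, hj⟩ 1 := by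
  funext r
  simp [toVec, Nat.testBit_two_pow, Pi.single_apply, Fin.ext_iff, eq_comm]

theorem toVec_sum_two_pow (n : ℕ) (s : Finset ℕ) :
    toVec n (∑ i ∈ s, 2 ^ i) = ∑ i ∈ s, toVec n (2 ^ i) := by
  funext r
  simp [toVec, Finset.sum_apply, Nat.testBit_two_pow, Nat.testBit_sum_two_pow]

theorem sum_toVec_two_pow_testBit (n x : ℕ) :
    ∑ j ∈ (range n).filter (x.testBit ·), toVec n (2 ^ j) = toVec n x := by
  rw [← toVec_sum_two_pow]
  funext r
  simp [toVec, Nat.testBit_sum_two_pow, r.isLt]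

theorem toVec_injOn (n : ℕ) : Set.InjOn (toVec n) (Set.Iio (2 ^ n)) := by
  intro u hu v hv h
  apply Nat.eq_of_testBit_eq
  intro r
  rcases lt_or_ge r n with hr | hr
  · have := congrFun h ⟨r, hr⟩
    simp only [toVec] at this
    cases hu : u.testBit r <;> cases hv : v.testBit r <;> simp_all
  · have h2 : 2 ^ n ≤ 2 ^ r := Nat.pow_le_pow_right (by norm_num) hr
    rw [Nat.testBit_lt_two_pow (by simp at hu; omega),
      Nat.testBit_lt_two_pow (by simp at hv; omega)]

theorem two_pow_bb (a : ℕ) : 2 ^ bb a = 2 * 2 ^ (bb a - 1) := by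
  simp [bb, pow_succ, mul_comm]

theorem lt_two_mul_two_pow_bb_sub_one (a : ℕ) : a < 2 * 2 ^ (bb a - 1) := by
  rw [← two_pow_bb]
  exact Nat.lt_pow_succ_log_self (by norm_num) a

theorem two_pow_bb_sub_one_le {a : ℕ} (ha : a ≠ 0) : 2 ^ (bb a - 1) ≤ a := by
  simpa [bb] using Nat.pow_log_le_self 2 ha

theorem mm_eq (a : ℕ) : mm a = 2 * 2 ^ (bb a - 1) - a - 1 := by
  rw [mm, two_pow_bb]

theorem two_pow_bb_sub_one_add_qq {a : ℕ} (ha : a ≠ 0) : 2 ^ (bb a - 1) + qq a = a := by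
  have := two_pow_bb_sub_one_le ha
  unfold qq
  omega

theorem sub_mm_eq {a : ℕ} (ha : a ≠ 0) : a - mm a = 2 * qq a + 1 := by
  have := two_pow_bb_sub_one_le ha
  have := lt_two_mul_two_pow_bb_sub_one a
  rw [mm_eq, qq]
  omega

/-- Column `p` of a parity-check matrix for `S`; the columns are a permutation of `1, …, a`. -/
def checkColumn (a p : ℕ) : ℕ :=
  if p = 0 then 2 ^ (bb a - 1)
  else if p % 2 = 1 then (p + 1) / 2
  else if p ≤ 2 * qq a then p / 2 + 2 ^ (bb a - 1)
  else p / 2 + (mm a + 1) / 2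

theorem checkColumn_zero (a : ℕ) : checkColumn a 0 = 2 ^ (bb a - 1) := rfl

theorem checkColumn_two_pow_sub_one (a j : ℕ) : checkColumn a (2 ^ (j + 1) - 1) = 2 ^ j := by
  have : 1 ≤ 2 ^ j := Nat.one_le_two_pow
  rw [checkColumn, pow_succ]
  split_ifs <;> omega

theorem checkColumn_pos_le {a p : ℕ} (hp : p < a) :
    0 < checkColumn a p ∧ checkColumn a p ≤ a := by
  have := two_pow_bb_sub_one_le (by omega : a ≠ 0)
  have := lt_two_mul_two_pow_bb_sub_one a
  have := mm_eq a
  unfold checkColumn qq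
  split_ifs <;> omega

theorem checkColumn_injOn (a : ℕ) : Set.InjOn (checkColumn a) (Set.Iio a) := by
  intro p hp p' hp' h
  simp only [Set.mem_Iio] at hp hp'
  have := two_pow_bb_sub_one_le (by omega : a ≠ 0)
  have := lt_two_mul_two_pow_bb_sub_one a
  have := mm_eq a
  unfold checkColumn qq at h
  split_ifs at h <;> omega

theorem qq_lt_checkColumn_lt {a p : ℕ} (hp : a - mm a ≤ p) (hpa : p < a) :
    qq a < checkColumn a p ∧ checkColumn a p < 2 ^ (bb a - 1) := by
  have := two_pow_bb_sub_one_le (by omega : a ≠ 0)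
  have := lt_two_mul_two_pow_bb_sub_one a
  have := mm_eq a
  rw [sub_mm_eq (by omega)] at hp
  unfold checkColumn qq at *
  split_ifs <;> omega

theorem mem_Ma_of_odd {a y : ℕ} (hy3 : 3 ≤ y) (hodd : y % 2 = 1) (hya : y ≤ a) :
    y ∈ Ma a := by
  refine ⟨by omega, hya, ?_⟩
  rintro ⟨_ | k, rfl⟩
  · omega
  · simp [pow_succ] at hodd

theorem two_mul_mem_Ma {a x : ℕ} (hx : x ∈ Ma a) (h2x : 2 * x ≤ a) : 2 * x ∈ Ma a := by
  obtain ⟨hx0, -, hxpow⟩ := hx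
  refine ⟨by omega, h2x, ?_⟩
  rintro ⟨_ | k, hk⟩
  · omega
  · exact hxpow ⟨k, by rw [pow_succ] at hk; omega⟩

theorem three_le_of_mem_Ma {a x : ℕ} (hx : x ∈ Ma a) : 3 ≤ x := by
  obtain ⟨hx0, -, hxpow⟩ := hx
  by_contra! h
  interval_cases x
  exacts [hxpow ⟨0, rfl⟩, hxpow ⟨1, rfl⟩]

theorem ff_eq_of_mem_Ma {a x : ℕ} (hx : x ∈ Ma a) :
    ff a x = if 2 ^ (bb a - 1) < x then 2 * (x - 2 ^ (bb a - 1)) + 1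
      else if 2 * x ≤ a then 2 * x else 2 * x + 1 - 2 * ((mm a + 1) / 2) := by
  have := hx.1
  have := hx.2.1
  have := two_pow_bb_sub_one_le (a := a) (by omega)
  have := lt_two_mul_two_pow_bb_sub_one a
  have := two_pow_bb a
  have hxP : x ≠ 2 ^ (bb a - 1) := fun h => hx.2.2 ⟨_, h⟩
  rw [ff, gg, Nat.testBit_of_lt_two_mul_two_pow (by omega)]
  by_cases hPx : 2 ^ (bb a - 1) < x
  · rw [if_pos (by simpa using hPx.le), if_pos hPx, ff', if_pos]
    · omega
    · exact mem_Ma_of_odd (by omega) (by omega) (by omega)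
  · rw [if_neg (by simp; omega), if_neg hPx]
    by_cases h2x : 2 * x ≤ a
    · rw [if_pos h2x, ff', if_pos (two_mul_mem_Ma hx h2x)]
    · rw [if_neg h2x, ff', if_neg (fun h => h2x h.2.1)]

theorem ff_mem_Ma {a x : ℕ} (hx : x ∈ Ma a) : ff a x ∈ Ma a := by
  have := three_le_of_mem_Ma hx
  have := hx.2.1
  have := two_pow_bb_sub_one_le (a := a) (by omega)
  have := lt_two_mul_two_pow_bb_sub_one a
  have := mm_eq a
  have hxP : x ≠ 2 ^ (bb a - 1) := fun h => hx.2.2 ⟨_, h⟩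
  rw [ff_eq_of_mem_Ma hx]
  split_ifs with hPx h2x
  · exact mem_Ma_of_odd (by omega) (by omega) (by omega)
  · exact two_mul_mem_Ma hx h2x
  · exact mem_Ma_of_odd (by omega) (by omega) (by omega)

theorem checkColumn_ff_sub_one {a x : ℕ} (hx : x ∈ Ma a) : checkColumn a (ff a x - 1) = x := by
  have := hx.1
  have := hx.2.1
  have := two_pow_bb_sub_one_le (a := a) (by omega)
  have := lt_two_mul_two_pow_bb_sub_one a
  have := mm_eq a
  have hxP : x ≠ 2 ^ (bb a - 1) := fun h => hx.2.2 ⟨_, h⟩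
  rw [ff_eq_of_mem_Ma hx]
  unfold checkColumn qq
  split_ifs <;> omega

def bitPosition (a j : ℕ) : ℕ := if j = bb a - 1 then 0 else 2 ^ (j + 1) - 1

theorem checkColumn_bitPosition (a j : ℕ) : checkColumn a (bitPosition a j) = 2 ^ j := by
  unfold bitPosition
  split_ifs with h
  · rw [h, checkColumn_zero]
  · exact checkColumn_two_pow_sub_one a j

theorem bitPosition_injective (a : ℕ) : Function.Injective (bitPosition a) := by
  intro j k h
  have hj : 2 ≤ 2 ^ (j + 1) := Nat.le_self_pow (by omega) 2
  have hk : 2 ≤ 2 ^ (k + 1) := Nat.le_self_pow (by omega) 2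
  unfold bitPosition at h
  split_ifs at h with h1 h2 h2
  · omega
  · omega
  · omega
  · exact Nat.succ_injective <|
      Nat.pow_right_injective le_rfl (by omega : 2 ^ (j + 1) = 2 ^ (k + 1))

theorem bitPosition_lt {a j : ℕ} (ha : a ≠ 0) (hj : j < bb a) : bitPosition a j < a := by
  have := two_pow_bb_sub_one_le ha
  have : 2 ^ (j + 1) ≤ 2 ^ (bb a - 1) ∨ j = bb a - 1 := by
    rcases eq_or_ne j (bb a - 1) with h | h
    · exact .inr h
    · exact .inl (Nat.pow_le_pow_right (by norm_num) (by omega))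
  unfold bitPosition
  split_ifs <;> omega

theorem ff_sub_one_ne_bitPosition {a x : ℕ} (hx : x ∈ Ma a) (j : ℕ) :
    ff a x - 1 ≠ bitPosition a j := by
  obtain ⟨hf0, -, hfpow⟩ := ff_mem_Ma hx
  have : 1 ≤ 2 ^ (j + 1) := Nat.one_le_two_pow
  unfold bitPosition
  split_ifs
  · exact fun h => hfpow ⟨0, by omega⟩
  · exact fun h => hfpow ⟨j + 1, by omega⟩

theorem hh_eq_add_sum (a x : ℕ) :
    hh a x =
      2 ^ (ff a x - 1) + ∑ j ∈ (range (bb a)).filter (x.testBit ·), 2 ^ bitPosition a j := by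
  rw [sum_filter, show bb a = bb a - 1 + 1 by simp [bb], sum_range_succ, hh, add_assoc]
  congr 2
  · refine sum_congr rfl fun j hj => ?_
    have : j ≠ bb a - 1 := by simp at hj; omega
    by_cases h : x.testBit j <;> simp [bitv, bitPosition, h, this]
  · by_cases h : x.testBit (bb a - 1) <;> simp [bitv, bitPosition, h]

def checkMatrix (a : ℕ) : Matrix (Fin (bb a)) (Fin a) (ZMod 2) :=
  Matrix.of fun r p => toVec (bb a) (checkColumn a p) r

theorem checkMatrix_mulVec_toVec_two_pow {a j : ℕ} (hj : j < a) :
    checkMatrix a *ᵥ toVec a (2 ^ j) = toVec (bb a) (checkColumn a j) := by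
  rw [toVec_two_pow hj, Matrix.mulVec_single_one]
  rfl

theorem checkMatrix_mulVec_toVec_hh {a x : ℕ} (hx : x ∈ Ma a) :
    checkMatrix a *ᵥ toVec a (hh a x) = 0 := by
  have ha : a ≠ 0 := by have := hx.1; have := hx.2.1; omega
  have hf : ff a x - 1 < a := by have := (ff_mem_Ma hx).1; have := (ff_mem_Ma hx).2.1; omega
  have hpos : ∀ j ∈ (range (bb a)).filter (x.testBit ·), bitPosition a j < a :=
    fun j hj => bitPosition_lt ha (mem_range.1 (mem_filter.1 hj).1)
  have hnot : ff a x - 1 ∉ ((range (bb a)).filter (x.testBit ·)).image (bitPosition a) := by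
    simp only [mem_image, not_exists, not_and]
    exact fun j _ h => ff_sub_one_ne_bitPosition hx j h.symm
  rw [hh_eq_add_sum, ← sum_image fun j _ k _ h => bitPosition_injective a h, ← sum_insert hnot,
    toVec_sum_two_pow, Matrix.mulVec_sum, sum_insert hnot,
    sum_image fun j _ k _ h => bitPosition_injective a h,
    checkMatrix_mulVec_toVec_two_pow hf, checkColumn_ff_sub_one hx,
    sum_congr rfl fun j hj => by
      rw [checkMatrix_mulVec_toVec_two_pow (hpos j hj), checkColumn_bitPosition],
    sum_toVec_two_pow_testBit]
  exact funext fun r => CharTwo.add_self_eq_zero _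

theorem checkMatrix_mulVec_eq_zero_of_mem_Ssub {a : ℕ} {v : Fin a → ZMod 2}
    (hv : v ∈ Ssub a) :
    checkMatrix a *ᵥ v = 0 := by
  refine (Submodule.span_le (p := LinearMap.ker (checkMatrix a).mulVecLin)).2 ?_ hv
  rintro _ ⟨_, ⟨x, hx, rfl⟩, rfl⟩
  exact checkMatrix_mulVec_toVec_hh hx

theorem checkMatrix_mulVec_toVec_one_xor_two_pow {a k : ℕ} (hk : a - mm a ≤ k) (hka : k < a) :
    checkMatrix a *ᵥ toVec a (1 ^^^ 2 ^ k) = toVec (bb a) (2 ^ (bb a - 1) + checkColumn a k) := by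
  conv_lhs => rw [← pow_zero 2, toVec_xor, mulVec_add]
  rw [checkMatrix_mulVec_toVec_two_pow (by omega), checkMatrix_mulVec_toVec_two_pow hka,
    ← toVec_xor, checkColumn_zero, Nat.two_pow_xor_eq_add (qq_lt_checkColumn_lt hk hka).2]

theorem exists_checkMatrix_mulVec_toVec_of_mem_Ta {a t : ℕ} (ht : t ∈ Ta a) :
    ∃ s < 2 ^ bb a, checkMatrix a *ᵥ toVec a t = toVec (bb a) s ∧
      (t = 0 ∧ s = 0 ∨ (∃ j < a, t = 2 ^ j ∧ s = checkColumn a j) ∨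
        ∃ k, a - mm a ≤ k ∧ k < a ∧ t = 1 ^^^ 2 ^ k ∧ s = 2 ^ (bb a - 1) + checkColumn a k) := by
  have := lt_two_mul_two_pow_bb_sub_one a
  have := two_pow_bb a
  rcases ht with (rfl | ⟨j, hj, rfl⟩) | hQ
  · exact ⟨0, by positivity, by rw [toVec_zero, mulVec_zero, toVec_zero], .inl ⟨rfl, rfl⟩⟩
  · have := (checkColumn_pos_le hj).2
    exact ⟨_, by omega, checkMatrix_mulVec_toVec_two_pow hj, .inr (.inl ⟨j, hj, rfl, rfl⟩)⟩
  · rw [Qa] at hQ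
    split_ifs at hQ
    · exact hQ.elim
    obtain ⟨k, hk, hka, rfl⟩ := hQ
    have := (qq_lt_checkColumn_lt hk hka).2
    exact ⟨_, by omega, checkMatrix_mulVec_toVec_one_xor_two_pow hk hka,
      .inr (.inr ⟨k, hk, hka, rfl, rfl⟩)⟩

theorem injOn_checkMatrix_mulVec_toVec_Ta {a : ℕ} (ha : a ≠ 0) :
    Set.InjOn (fun t => checkMatrix a *ᵥ toVec a t) (Ta a) := by
  intro t ht t' ht' h
  obtain ⟨s, hs, hts, hst⟩ := exists_checkMatrix_mulVec_toVec_of_mem_Ta ht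
  obtain ⟨s', hs', hts', hst'⟩ := exists_checkMatrix_mulVec_toVec_of_mem_Ta ht'
  obtain rfl : s = s' := toVec_injOn _ hs hs' (hts.symm.trans (h.trans hts'))
  have hcol := fun p (hp : p < a) => checkColumn_pos_le hp
  have hQ := fun p (hp : a - mm a ≤ p) (hpa : p < a) => qq_lt_checkColumn_lt hp hpa
  have hinj := checkColumn_injOn a
  have := two_pow_bb_sub_one_add_qq ha
  rcases hst with ⟨rfl, rfl⟩ | ⟨j, hj, rfl, rfl⟩ | ⟨k, hk, hka, rfl, rfl⟩ <;>
    rcases hst' with ⟨rfl, heq⟩ | ⟨j', hj', rfl, heq⟩ | ⟨k', hk', hka', rfl, heq⟩ <;>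
    grind [Set.InjOn]

/-- for distinct `i, j ∈ S` the translates `i ⊕ T_a` and `j ⊕ T_a`
are disjoint. -/
theorem translates_disjoint (a : ℕ) (ha : 2 ≤ a) :
    ∀ i j : ℕ, i < 2 ^ a → j < 2 ^ a →
      toVec a i ∈ Ssub a → toVec a j ∈ Ssub a → i ≠ j →
      Disjoint ((fun t => i ^^^ t) '' Ta a) ((fun t => j ^^^ t) '' Ta a) := by
  intro i j _ _ hi hj hij
  rw [Set.disjoint_left]
  rintro _ ⟨t, ht, rfl⟩ ⟨t', ht', h⟩
  have hsyn : checkMatrix a *ᵥ toVec a t' = checkMatrix a *ᵥ toVec a t := by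
    simpa [toVec_xor, mulVec_add, checkMatrix_mulVec_eq_zero_of_mem_Ssub, hi, hj] using
      congrArg (fun z => checkMatrix a *ᵥ toVec a z) h
  obtain rfl := injOn_checkMatrix_mulVec_toVec_Ta (by omega) ht' ht hsyn
  exact hij (by simpa [Nat.xor_assoc] using congrArg (· ^^^ t') h.symm)
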